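/- Let G be a finite simple connected chordal graph and let xy be an exposed edge of G. Then the graph G − xy obtained by deleting the edge xy is connected and chordal. -/

import Mathlib

variable {V : Type*}

/-- A maximal clique of `G`: a clique not properly contained in any other clique. -/
def IsMaxClique (G : SimpleGraph V) (s : Set V) : Prop :=
  G.IsClique s ∧ ∀ t : Set V, G.IsClique t → s ⊆ t → t = s

/-- `xy` is a facet edge of `G` if it is an edge and `{x, y}` is a maximal clique. -/
def IsFacetEdge (G : SimpleGraph V) (x y : V) : Prop :=
  G.Adj x y ∧ IsMaxClique G {x, y}

/-- `xy` is an exposed edge of `G` if it is an edge contained in a unique maximal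
clique and it is not a facet edge. -/
def IsExposedEdge (G : SimpleGraph V) (x y : V) : Prop :=
  G.Adj x y ∧ (∃! s : Set V, IsMaxClique G s ∧ x ∈ s ∧ y ∈ s) ∧ ¬ IsFacetEdge G x y

/-- A graph is chordal if every cycle of length at least four has a chord, i.e. an
edge of the graph joining two vertices of the cycle which is not an edge of the cycle. -/
def IsChordal (G : SimpleGraph V) : Prop :=
  ∀ ⦃v : V⦄ (w : G.Walk v v), w.IsCycle → 4 ≤ w.length →
    ∃ a b, a ∈ w.support ∧ b ∈ w.support ∧ G.Adj a b ∧ s(a, b) ∉ w.edges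

/-- `H` is obtained from `G` through an erasure: deletion of a single exposed edge. -/
def Erasure (G H : SimpleGraph V) : Prop :=
  ∃ x y : V, IsExposedEdge G x y ∧ H = G.deleteEdges {s(x, y)}


/-!
The edge `xy` lies in a unique maximal clique `S ⊋ {x, y}`. Hence `x` and `y` have a common
neighbour, so `xy` is not a bridge, and every common neighbour of `x` and `y` lies in `S`, so the
common neighbours form a clique. A cycle of `G - xy` of length at least four has a chord in `G`;
the only case to handle is when that chord is `xy`. Then `xy` cuts the cycle into two `x`–`y`
arcs. An arc of length at least three closes up with `xy` to a cycle of `G`, whose chord other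
than `xy` is a chord of the original cycle; if both arcs have length two, their midpoints are
common neighbours of `x` and `y`, hence adjacent.
-/

open SimpleGraph Walk

section

variable {G : SimpleGraph V} {x y : V}

lemma SimpleGraph.IsClique.exists_isMaxClique_superset [Finite V] {s : Set V}
    (hs : G.IsClique s) : ∃ t, IsMaxClique G t ∧ s ⊆ t := by
  obtain ⟨t, ht, hmax⟩ := Set.Finite.exists_maximalFor id {t : Set V | G.IsClique t ∧ s ⊆ t}
    (Set.toFinite _) ⟨s, hs, subset_rfl⟩
  exact ⟨t, ⟨ht.1, fun u hu htu => (hmax ⟨hu, ht.2.trans htu⟩ htu).antisymm htu⟩, ht.2⟩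

lemma IsExposedEdge.exists_commonNeighbor (h : IsExposedEdge G x y) :
    ∃ z, G.Adj x z ∧ G.Adj z y := by
  obtain ⟨hxy, ⟨S, ⟨hS, hxS, hyS⟩, -⟩, hfacet⟩ := h
  obtain ⟨z, hzS, hz⟩ : ∃ z ∈ S, z ∉ ({x, y} : Set V) := by
    by_contra! hsub
    have hS_eq : S = {x, y} := (Set.pair_subset hxS hyS).antisymm' hsub
    exact hfacet ⟨hxy, hS_eq ▸ hS⟩
  simp only [Set.mem_insert_iff, Set.mem_singleton_iff, not_or] at hz
  exact ⟨z, hS.1 hxS hzS (Ne.symm hz.1), hS.1 hzS hyS hz.2⟩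

lemma IsExposedEdge.isClique_commonNeighbors [Finite V] (h : IsExposedEdge G x y) :
    G.IsClique (G.commonNeighbors x y) := by
  obtain ⟨hxy, ⟨S, ⟨hS, hxS, hyS⟩, hS_unique⟩, -⟩ := h
  refine hS.1.subset fun z hz => ?_
  obtain ⟨hxz, hyz⟩ := G.mem_commonNeighbors.1 hz
  have hxyz : G.IsClique {x, y, z} := by
    simp [isClique_insert, hxy, hxz, hyz]
  obtain ⟨T, hT, hxyzT⟩ := hxyz.exists_isMaxClique_superset
  rw [← hS_unique T ⟨hT, hxyzT (by simp), hxyzT (by simp)⟩]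
  exact hxyzT (by simp)

lemma SimpleGraph.not_isBridge_of_adj_of_adj {z : V} (hxz : G.Adj x z) (hzy : G.Adj z y) :
    ¬ G.IsBridge s(x, y) := by
  rw [isBridge_iff_forall_walk_mem_edges, not_forall]
  exact ⟨cons hxz (cons hzy nil), by simp [hxz.ne, hzy.ne']⟩

namespace SimpleGraph.Walk

lemma two_le_length_of_notMem_edges (p : G.Walk x y) (hxy : x ≠ y) (he : s(x, y) ∉ p.edges) :
    2 ≤ p.length := by
  match p with
  | nil => exact absurd rfl hxy
  | cons _ nil => simp at he
  | cons _ (cons _ _) => simp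

lemma snd_mem_commonNeighbors (p : G.Walk x y) (hp : p.length = 2) :
    p.snd ∈ G.commonNeighbors x y := by
  have hsnd := p.adj_getVert_succ (i := 1) (by omega)
  rw [show 1 + 1 = p.length by omega, getVert_length] at hsnd
  exact G.mem_commonNeighbors.2 ⟨p.adj_snd (by simp [← length_eq_zero_iff, hp]), hsnd.symm⟩

lemma IsCycle.eq_or_eq_of_mem_support {u : V} {p : G.Walk x y} {q : G.Walk y x}
    (hc : (p.append q).IsCycle) (hp : u ∈ p.support) (hq : u ∈ q.support) : u = x ∨ u = y := by
  have hnodup := hc.support_nodup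
  rw [tail_support_append, List.nodup_append] at hnodup
  rw [← cons_tail_support] at hp hq
  rcases List.mem_cons.1 hp with rfl | hp
  · exact .inl rfl
  rcases List.mem_cons.1 hq with rfl | hq
  · exact .inr rfl
  exact absurd rfl (hnodup.2.2 u hp u hq)

end SimpleGraph.Walk

namespace IsChordal

lemma exists_chord_of_isPath (hG : IsChordal G) (hxy : G.Adj x y) {p : G.Walk x y}
    (hp : p.IsPath) (he : s(x, y) ∉ p.edges) (hlen : 3 ≤ p.length) :
    ∃ a b, a ∈ p.support ∧ b ∈ p.support ∧ G.Adj a b ∧ s(a, b) ∉ p.edges ∧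
      s(a, b) ≠ s(x, y) := by
  have hc : (cons hxy.symm p).IsCycle :=
    (cons_isCycle_iff p hxy.symm).2 ⟨hp, by rwa [Sym2.eq_swap]⟩
  obtain ⟨a, b, ha, hb, hab, habc⟩ := hG _ hc (by rw [length_cons]; omega)
  rw [support_cons, List.mem_cons] at ha hb
  rw [edges_cons, List.mem_cons, not_or, Sym2.eq_swap (a := y)] at habc
  exact ⟨a, b, ha.elim (· ▸ p.end_mem_support) id, hb.elim (· ▸ p.end_mem_support) id, hab,
    habc.2, habc.1⟩

lemma exists_chord_of_three_le_length (hG : IsChordal G) (hxy : G.Adj x y) {p : G.Walk x y}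
    {q : G.Walk y x} (hp : p.IsPath) (hpq : ∀ u ∈ p.support, u ∈ q.support → u = x ∨ u = y)
    (he : s(x, y) ∉ p.edges) (hlen : 3 ≤ p.length) :
    ∃ a b, a ∈ p.support ∧ b ∈ p.support ∧ G.Adj a b ∧ s(a, b) ∉ p.edges ∧
      s(a, b) ∉ q.edges ∧ s(a, b) ≠ s(x, y) := by
  obtain ⟨a, b, ha, hb, hab, habp, habxy⟩ := hG.exists_chord_of_isPath hxy hp he hlen
  refine ⟨a, b, ha, hb, hab, habp, fun habq => habxy ?_, habxy⟩
  rcases hpq a ha (q.fst_mem_support_of_mem_edges habq) with rfl | rfl <;>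
    rcases hpq b hb (q.snd_mem_support_of_mem_edges habq) with rfl | rfl
  exacts [absurd rfl hab.ne, rfl, Sym2.eq_swap, absurd rfl hab.ne]

end IsChordal

lemma SimpleGraph.exists_chord_of_length_eq_two (hN : G.IsClique (G.commonNeighbors x y)) {p : G.Walk x y}
    {q : G.Walk y x} (hpq : ∀ u ∈ p.support, u ∈ q.support → u = x ∨ u = y)
    (hp : p.length = 2) (hq : q.length = 2) :
    ∃ a b, a ∈ p.support ∧ b ∈ q.support ∧ G.Adj a b ∧ s(a, b) ∉ p.edges ∧
      s(a, b) ∉ q.edges ∧ s(a, b) ≠ s(x, y) := by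
  have ha := p.snd_mem_commonNeighbors hp
  have hb := q.snd_mem_commonNeighbors hq
  rw [commonNeighbors_symm] at hb
  have hout : ∀ u ∈ G.commonNeighbors x y, ¬ (u = x ∨ u = y) := fun u hu =>
    not_or.2 ⟨(G.mem_commonNeighbors.1 hu).1.ne', (G.mem_commonNeighbors.1 hu).2.ne'⟩
  have hap := p.getVert_mem_support 1
  have hbq := q.getVert_mem_support 1
  have hab : p.snd ≠ q.snd := fun h => hout _ ha (hpq _ hap (h ▸ hbq))
  refine ⟨p.snd, q.snd, hap, hbq, hN ha hb hab, fun h => hout _ hb ?_, fun h => hout _ ha ?_,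
    fun h => hout _ ha (Sym2.mem_iff.1 (h ▸ Sym2.mem_mk_left _ _))⟩
  · exact hpq _ (p.snd_mem_support_of_mem_edges h) hbq
  · exact hpq _ hap (q.fst_mem_support_of_mem_edges h)

namespace IsChordal

lemma exists_chord_ne_of_isCycle_append (hG : IsChordal G) (hxy : G.Adj x y)
    (hN : G.IsClique (G.commonNeighbors x y)) {p : G.Walk x y} {q : G.Walk y x}
    (hc : (p.append q).IsCycle) (he : s(x, y) ∉ (p.append q).edges) :
    ∃ a b, a ∈ (p.append q).support ∧ b ∈ (p.append q).support ∧ G.Adj a b ∧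
      s(a, b) ∉ (p.append q).edges ∧ s(a, b) ≠ s(x, y) := by
  simp only [mem_support_append_iff, edges_append, List.mem_append, not_or] at he ⊢
  obtain ⟨hep, heq⟩ := he
  rw [Sym2.eq_swap] at heq
  have hpq : ∀ u ∈ p.support, u ∈ q.support → u = x ∨ u = y :=
    fun _ => hc.eq_or_eq_of_mem_support
  have hp2 := p.two_le_length_of_notMem_edges hxy.ne hep
  have hq2 := q.two_le_length_of_notMem_edges hxy.ne' heq
  by_cases hp3 : 3 ≤ p.length
  · obtain ⟨a, b, ha, hb, hab, habp, habq, habxy⟩ := hG.exists_chord_of_three_le_length hxy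
      (hc.isPath_of_append_left (not_nil_of_ne hxy.ne')) hpq hep hp3
    exact ⟨a, b, .inl ha, .inl hb, hab, ⟨habp, habq⟩, habxy⟩
  by_cases hq3 : 3 ≤ q.length
  · obtain ⟨a, b, ha, hb, hab, habq, habp, habxy⟩ := hG.exists_chord_of_three_le_length hxy.symm
      (hc.isPath_of_append_right (not_nil_of_ne hxy.ne)) (fun u hq hp => (hpq u hp hq).symm)
      heq hq3
    exact ⟨a, b, .inr ha, .inr hb, hab, ⟨habp, habq⟩, by rwa [Sym2.eq_swap (a := x)]⟩
  obtain ⟨a, b, ha, hb, hab, habp, habq, habxy⟩ :=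
    exists_chord_of_length_eq_two hN hpq (by omega) (by omega)
  exact ⟨a, b, .inl ha, .inr hb, hab, ⟨habp, habq⟩, habxy⟩

lemma exists_chord_ne (hG : IsChordal G) (hxy : G.Adj x y)
    (hN : G.IsClique (G.commonNeighbors x y)) {v : V} {c : G.Walk v v} (hc : c.IsCycle)
    (hx : x ∈ c.support) (hy : y ∈ c.support) (he : s(x, y) ∉ c.edges) :
    ∃ a b, a ∈ c.support ∧ b ∈ c.support ∧ G.Adj a b ∧ s(a, b) ∉ c.edges ∧
      s(a, b) ≠ s(x, y) := by
  classical
  have hmem (u : V) : u ∈ (c.rotate x hx).support ↔ u ∈ c.support :=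
    c.mem_support_rotate_iff x hx
  have hedge (e : Sym2 V) : e ∈ (c.rotate x hx).edges ↔ e ∈ c.edges :=
    (c.rotate_edges x hx).mem_iff
  have hsplit := (c.rotate x hx).take_spec ((hmem y).2 hy)
  have hc' := hc.rotate hx
  rw [← hsplit] at hc'
  obtain ⟨a, b, ha, hb, hab, habc, habxy⟩ := hG.exists_chord_ne_of_isCycle_append hxy hN hc'
    (by rwa [hsplit, hedge])
  rw [hsplit, hmem] at ha hb
  rw [hsplit, hedge] at habc
  exact ⟨a, b, ha, hb, hab, habc, habxy⟩

theorem deleteEdges_of_isClique_commonNeighbors (hG : IsChordal G)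
    (hN : G.IsClique (G.commonNeighbors x y)) : IsChordal (G.deleteEdges {s(x, y)}) := by
  intro v w hw hlen
  have hle := G.deleteEdges_le {s(x, y)}
  obtain ⟨a, b, ha, hb, hab, habw⟩ := hG (w.mapLe hle) (hw.mapLe hle) (by rwa [length_mapLe])
  rw [support_mapLe_eq_support] at ha hb
  rw [edges_mapLe_eq_edges] at habw
  suffices ∃ a b, a ∈ w.support ∧ b ∈ w.support ∧ G.Adj a b ∧ s(a, b) ∉ w.edges ∧
      s(a, b) ≠ s(x, y) by
    obtain ⟨a, b, ha, hb, hab, habw, habxy⟩ := this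
    exact ⟨a, b, ha, hb, (G.deleteEdges_adj ..).2 ⟨hab, by simpa using habxy⟩, habw⟩
  by_cases habxy : s(a, b) = s(x, y)
  · obtain ⟨hx, hy, hxy⟩ : x ∈ w.support ∧ y ∈ w.support ∧ G.Adj x y := by
      rcases Sym2.eq_iff.1 habxy with ⟨rfl, rfl⟩ | ⟨rfl, rfl⟩
      exacts [⟨ha, hb, hab⟩, ⟨hb, ha, hab.symm⟩]
    have := hG.exists_chord_ne hxy hN (hw.mapLe hle) (by rwa [support_mapLe_eq_support])
      (by rwa [support_mapLe_eq_support]) fun h => by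
        rw [edges_mapLe_eq_edges] at h; simpa using w.edges_subset_edgeSet h
    simpa only [support_mapLe_eq_support, edges_mapLe_eq_edges] using this
  · exact ⟨a, b, ha, hb, hab, habw, habxy⟩

end IsChordal

end

/-- Deleting an exposed edge from a connected chordal graph yields a connected
chordal graph. -/
theorem erasure_connected_chordal [Fintype V] (G : SimpleGraph V)
    (hconn : G.Connected) (hchord : IsChordal G) (x y : V)
    (h : IsExposedEdge G x y) :
    (G.deleteEdges {s(x, y)}).Connected ∧ IsChordal (G.deleteEdges {s(x, y)}) := by
  obtain ⟨z, hxz, hzy⟩ := h.exists_commonNeighbor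
  exact ⟨hconn.connected_delete_edge_of_not_isBridge (not_isBridge_of_adj_of_adj hxz hzy),
    hchord.deleteEdges_of_isClique_commonNeighbors h.isClique_commonNeighbors⟩
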